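/- Let f₀, g₀, f₁, g₁ be nonzero homogeneous polynomials of degree 1 in ℂ[s,t] such that neither f₀ nor g₀ is a scalar multiple of f₁ or of g₁. Then for every nonzero homogeneous polynomial ℓ of degree 1 in ℂ[s,t], the cube ℓ³ does not divide f₀²g₀² − f₁²g₁². (This is the paper's argument, via the factorization f₀²g₀²−f₁²g₁² = (f₀g₀+f₁g₁)(f₀g₀−f₁g₁), that no degree-4 base change ℙ¹ → ℙ¹ can have ramification index (2,2) over two points and (3,1) over a third point.) -/

import Mathlib

/-!
Write `a = f₀g₀`, `b = f₁g₁`. Non-proportional linear forms are relatively prime, so `a` and `b` are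
relatively prime, hence `a ± b ≠ 0` and both are binary quadratic forms. A linear form `ℓ` with
`ℓ³ ∣ a² - b² = (a + b)(a - b)` cannot have `ℓ³` dividing one quadratic factor, so it divides
both; then it divides `a` and `b` (as `2` is a unit), contradicting relative primality.
-/

open MvPolynomial

theorem IsRelPrime.add_ne_zero {R : Type*} [CommRing R] {a b : R} (hab : IsRelPrime a b)
    (ha : ¬IsUnit a) : a + b ≠ 0 :=
  fun h => ha (hab.isUnit_of_dvd ⟨-1, by linear_combination h⟩)

theorem IsRelPrime.sub_ne_zero {R : Type*} [CommRing R] {a b : R} (hab : IsRelPrime a b)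
    (ha : ¬IsUnit a) : a - b ≠ 0 :=
  fun h => ha (hab.isUnit_of_dvd ⟨1, by linear_combination -h⟩)

theorem Prime.not_pow_dvd_sq_sub_sq {R : Type*} [CommRing R] [IsDomain R] {ℓ a b : R} {k : ℕ}
    (hℓ : Prime ℓ) (h2 : IsUnit (2 : R)) (hab : IsRelPrime a b) (hadd : ¬ℓ ^ k ∣ a + b)
    (hsub : ¬ℓ ^ k ∣ a - b) : ¬ℓ ^ k ∣ a ^ 2 - b ^ 2 := by
  intro h
  rw [sq_sub_sq] at h
  have hℓadd : ℓ ∣ a + b := by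
    by_contra hn
    exact hsub (hℓ.pow_dvd_of_dvd_mul_left k hn h)
  have hℓsub : ℓ ∣ a - b := by
    by_contra hn
    exact hadd (hℓ.pow_dvd_of_dvd_mul_right k hn h)
  have hℓa : ℓ ∣ a := h2.dvd_mul_left.1 <| by
    simpa only [show a + b + (a - b) = 2 * a by ring] using dvd_add hℓadd hℓsub
  have hℓb : ℓ ∣ b := h2.dvd_mul_left.1 <| by
    simpa only [show a + b - (a - b) = 2 * b by ring] using dvd_sub hℓadd hℓsub
  exact hℓ.not_isUnit (hab hℓa hℓb)

namespace MvPolynomial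

variable {σ R K : Type*}

theorem IsHomogeneous.not_pow_dvd [CommRing R] [IsDomain R] {ℓ p : MvPolynomial σ R}
    {m n k : ℕ} (hℓ : ℓ.IsHomogeneous m) (hℓ0 : ℓ ≠ 0) (hp : p.IsHomogeneous n) (hp0 : p ≠ 0)
    (hlt : n < m * k) : ¬ℓ ^ k ∣ p := by
  intro h
  have hle := totalDegree_le_of_dvd_of_isDomain h hp0
  rw [(hℓ.pow k).totalDegree (pow_ne_zero k hℓ0), hp.totalDegree hp0] at hle
  exact hle.not_gt hlt

theorem exists_smul_eq_of_associated [CommRing R] [IsReduced R] {p q : MvPolynomial σ R}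
    (h : Associated p q) : ∃ c : R, IsUnit c ∧ q = c • p := by
  obtain ⟨u, rfl⟩ := h
  obtain ⟨c, hc, hu⟩ := isUnit_iff_eq_C_of_isReduced.1 u.isUnit
  exact ⟨c, hc, by rw [hu, smul_eq_C_mul, mul_comm]⟩

variable [Field K]

theorem IsHomogeneous.prime_of_degree_one {p : MvPolynomial σ K} (hp : p.IsHomogeneous 1)
    (hp0 : p ≠ 0) : Prime p := by
  refine (irreducible_of_totalDegree_eq_one (hp.totalDegree hp0) fun x hx => ?_).prime
  refine isUnit_iff_ne_zero.2 fun hx0 => hp0 (MvPolynomial.ext _ _ fun i => ?_)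
  simpa [hx0] using hx i

theorem IsHomogeneous.isRelPrime_of_forall_ne_smul {u v : MvPolynomial σ K}
    (hu : u.IsHomogeneous 1) (hu0 : u ≠ 0) (hv : v.IsHomogeneous 1) (hv0 : v ≠ 0)
    (h : ∀ c : K, c ≠ 0 → u ≠ c • v) : IsRelPrime u v := by
  have hup := hu.prime_of_degree_one hu0
  rw [hup.irreducible.isRelPrime_iff_not_dvd, hup.dvd_prime_iff_associated (hv.prime_of_degree_one hv0)]
  intro huv
  obtain ⟨c, hc, hvu⟩ := exists_smul_eq_of_associated huv.symm
  exact h c hc.ne_zero hvu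

end MvPolynomial

theorem stmt_17 (f₀ g₀ f₁ g₁ : MvPolynomial (Fin 2) ℂ)
    (hf₀ : f₀ ≠ 0) (hg₀ : g₀ ≠ 0) (hf₁ : f₁ ≠ 0) (hg₁ : g₁ ≠ 0)
    (hf₀h : f₀.IsHomogeneous 1) (hg₀h : g₀.IsHomogeneous 1)
    (hf₁h : f₁.IsHomogeneous 1) (hg₁h : g₁.IsHomogeneous 1)
    (h₀₁ : ∀ c : ℂ, c ≠ 0 → f₀ ≠ c • f₁) (h₀₂ : ∀ c : ℂ, c ≠ 0 → f₀ ≠ c • g₁)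
    (h₀₃ : ∀ c : ℂ, c ≠ 0 → g₀ ≠ c • f₁) (h₀₄ : ∀ c : ℂ, c ≠ 0 → g₀ ≠ c • g₁) :
    ∀ ℓ : MvPolynomial (Fin 2) ℂ, ℓ ≠ 0 → ℓ.IsHomogeneous 1 →
      ¬ (ℓ ^ 3 ∣ f₀ ^ 2 * g₀ ^ 2 - f₁ ^ 2 * g₁ ^ 2) := by
  intro ℓ hℓ hℓh
  have hrel : IsRelPrime (f₀ * g₀) (f₁ * g₁) :=
    ((hf₀h.isRelPrime_of_forall_ne_smul hf₀ hf₁h hf₁ h₀₁).mul_right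
        (hf₀h.isRelPrime_of_forall_ne_smul hf₀ hg₁h hg₁ h₀₂)).mul_left
      ((hg₀h.isRelPrime_of_forall_ne_smul hg₀ hf₁h hf₁ h₀₃).mul_right
        (hg₀h.isRelPrime_of_forall_ne_smul hg₀ hg₁h hg₁ h₀₄))
  have hnu : ¬IsUnit (f₀ * g₀) := fun h =>
    (hf₀h.prime_of_degree_one hf₀).not_isUnit (isUnit_of_mul_isUnit_left h)
  have h2 : IsUnit (2 : MvPolynomial (Fin 2) ℂ) := by
    rw [← map_ofNat C 2]
    exact (isUnit_iff_ne_zero.2 two_ne_zero).map C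
  have haddh := (hf₀h.mul hg₀h).add (hf₁h.mul hg₁h)
  have hsubh := (hf₀h.mul hg₀h).sub (hf₁h.mul hg₁h)
  rw [← mul_pow, ← mul_pow]
  exact (hℓh.prime_of_degree_one hℓ).not_pow_dvd_sq_sub_sq h2 hrel
    (hℓh.not_pow_dvd hℓ haddh (hrel.add_ne_zero hnu) (by norm_num))
    (hℓh.not_pow_dvd hℓ hsubh (hrel.sub_ne_zero hnu) (by norm_num))
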